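/- Let X be a scheme of finite type over a finite field F_q, let r ≥ 1, and let X_{F_{q^r}} = X ×_{Spec F_q} Spec F_{q^r} denote the base change, viewed as a scheme over F_{q^r}. Then for every n ≥ 1 there is a natural bijection between the set of F_{q^r}-morphisms Spec F_{q^{nr}} → X_{F_{q^r}} and the set of F_q-morphisms Spec F_{q^{nr}} → X; hence N_n(X_{F_{q^r}} / F_{q^r}) = N_{nr}(X / F_q). Consequently, the ghost coordinates satisfy gh_n(Z(X_{F_{q^r}}/F_{q^r}, t)) = gh_{nr}(Z(X/F_q, t)) for all n, i.e., Fr_r(Z(X/F_q, t)) = Z(X_{F_{q^r}}/F_{q^r}, t): the Frobenius operator Fr_r on the Witt ring corresponds to base change to F_{q^r}. -/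

import Mathlib

open AlgebraicGeometry CategoryTheory

noncomputable section

/-- The set `X(K)` of `K`-points of a scheme `X` over `Spec k`. -/
def ptsOver (k : Type) [Field k] (K : Type) [Field K] [Algebra k K]
    (X : Scheme) (f : X ⟶ Spec (CommRingCat.of k)) : Type :=
  { g : Spec (CommRingCat.of K) ⟶ X //
      g ≫ f = Spec.map (CommRingCat.ofHom (algebraMap k K)) }

/-- The exponential `exp(L(t))` of a power series `L` over `ℚ` (intended for `L` with
zero constant coefficient). -/
def expComp (L : PowerSeries ℚ) : PowerSeries ℚ :=
  PowerSeries.mk fun n =>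
    ∑ j ∈ Finset.range (n + 1), PowerSeries.coeff n (L ^ j) / (Nat.factorial j : ℚ)

/-- The Hasse-Weil zeta function `exp(∑_{r≥1} N_r tʳ/r)` attached to a point-count
function `N : ℕ → ℕ`. -/
def zetaOfCounts (N : ℕ → ℕ) : PowerSeries ℚ :=
  expComp (PowerSeries.mk fun r => if r = 0 then 0 else (N r : ℚ) / r)

/-- The `n`-th ghost coordinate of a power series `P` (with constant coefficient `1`)
over `ℚ`: the `n`-th coefficient of `t·P'(t)/P(t)`. -/
def ghost (n : ℕ) (P : PowerSeries ℚ) : ℚ :=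
  PowerSeries.coeff n (PowerSeries.X * P.derivativeFun * P⁻¹)

/-! Base change `X_{K r} = X ×_k Spec (K r)` has the universal property of a fibre product, so its
`K r`-points with values in an extension `K (n r)` are exactly the `k`-points of `X` with values
in `K (n r)`. On the zeta side, `Z = exp ∘ L` with `L = ∑ N_m t^m / m`, so the chain rule gives
`t Z'/Z = t L'`, whose `n`-th coefficient is `N_n`; so both ghost coordinates equal `N_{nr}(X/k)`. -/

namespace PowerSeries

theorem coeff_pow_eq_zero_of_lt {R : Type*} [CommSemiring R] {φ : R⟦X⟧}
    (hφ : constantCoeff φ = 0) {n j : ℕ} (hnj : n < j) : coeff n (φ ^ j) = 0 :=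
  X_pow_dvd_iff.mp (pow_dvd_pow_of_dvd (X_dvd_iff.mpr hφ) j) n hnj

variable {L : ℚ⟦X⟧}

theorem expComp_eq_subst_exp (hL : constantCoeff L = 0) : expComp L = (exp ℚ).subst L := by
  ext n
  rw [coeff_subst' (HasSubst.of_constantCoeff_zero' hL), expComp, coeff_mk,
    finsum_eq_sum_of_support_subset (s := Finset.range (n + 1))]
  · refine Finset.sum_congr rfl fun j _ => ?_
    rw [coeff_exp, smul_eq_mul, Algebra.algebraMap_self, RingHom.id_apply, one_div,
      inv_mul_eq_div]
  · intro j hj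
    by_contra hjn
    refine hj (show _ • _ = 0 from ?_)
    rw [coeff_pow_eq_zero_of_lt hL (by simpa using hjn), smul_zero]

theorem derivative_expComp (hL : constantCoeff L = 0) :
    d⁄dX ℚ (expComp L) = expComp L * d⁄dX ℚ L := by
  rw [expComp_eq_subst_exp hL, derivative_subst (HasSubst.of_constantCoeff_zero' hL),
    derivative_exp]

theorem constantCoeff_expComp : constantCoeff (expComp L) = 1 := by
  rw [← coeff_zero_eq_constantCoeff_apply, expComp, coeff_mk]
  simp

/-- The logarithmic derivative of `exp L` is `L'`. -/
theorem ghost_expComp (hL : constantCoeff L = 0) (n : ℕ) :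
    ghost n (expComp L) = n * coeff n L := by
  have hunit : expComp L * (expComp L)⁻¹ = 1 :=
    PowerSeries.mul_inv_cancel _ (by simp [constantCoeff_expComp])
  change coeff n (X * d⁄dX ℚ (expComp L) * (expComp L)⁻¹) = _
  rw [derivative_expComp hL, mul_assoc, mul_right_comm, hunit, one_mul]
  rcases n with _ | n
  · simp
  · rw [coeff_succ_X_mul, coeff_derivative]
    push_cast
    ring

theorem ghost_zetaOfCounts (N : ℕ → ℕ) {n : ℕ} (hn : n ≠ 0) :
    ghost n (zetaOfCounts N) = N n := by
  have hL : constantCoeff (mk fun r => if r = 0 then 0 else (N r : ℚ) / r) = 0 := by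
    rw [← coeff_zero_eq_constantCoeff_apply, coeff_mk, if_pos rfl]
  rw [zetaOfCounts, ghost_expComp hL, coeff_mk, if_neg hn]
  field_simp

end PowerSeries

def ptsOverPullbackEquiv {k : Type} [Field k] (K' L : Type) [Field K'] [Field L]
    [Algebra k K'] [Algebra k L] [Algebra K' L] [IsScalarTower k K' L]
    (X : Scheme) (f : X ⟶ Spec (CommRingCat.of k)) :
    ptsOver K' L (Limits.pullback f (Spec.map (CommRingCat.ofHom (algebraMap k K'))))
        (Limits.pullback.snd f (Spec.map (CommRingCat.ofHom (algebraMap k K')))) ≃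
      ptsOver k L X f :=
  have htower : Spec.map (CommRingCat.ofHom (algebraMap K' L)) ≫
      Spec.map (CommRingCat.ofHom (algebraMap k K')) =
        Spec.map (CommRingCat.ofHom (algebraMap k L)) := by
    rw [← Spec.map_comp, ← CommRingCat.ofHom_comp, ← IsScalarTower.algebraMap_eq]
  { toFun := fun g =>
      ⟨g.1 ≫ Limits.pullback.fst _ _, by
        rw [Category.assoc, Limits.pullback.condition, ← Category.assoc, g.2, htower]⟩
    invFun := fun h =>
      ⟨Limits.pullback.lift h.1 (Spec.map (CommRingCat.ofHom (algebraMap K' L)))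
          (by rw [h.2, htower]),
        Limits.pullback.lift_snd _ _ _⟩
    left_inv := fun g =>
      Subtype.ext (Limits.pullback.hom_ext (Limits.pullback.lift_fst _ _ _)
        ((Limits.pullback.lift_snd _ _ _).trans g.2.symm))
    right_inv := fun h => Subtype.ext (Limits.pullback.lift_fst _ _ _) }

theorem frobenius_corresponds_to_base_change_general
    {k : Type} [Field k]
    (K : ℕ → Type) [∀ m, Field (K m)] [∀ m, Algebra k (K m)]
    (X : Scheme) (f : X ⟶ Spec (CommRingCat.of k))
    (r : ℕ) (hr : 1 ≤ r)
    [∀ m, Algebra (K r) (K (m * r))] [∀ m, IsScalarTower k (K r) (K (m * r))] :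
    (∀ n : ℕ, 1 ≤ n →
      Nonempty
        (ptsOver (K r) (K (n * r))
            (Limits.pullback f (Spec.map (CommRingCat.ofHom (algebraMap k (K r)))))
            (Limits.pullback.snd f (Spec.map (CommRingCat.ofHom (algebraMap k (K r))))) ≃
          ptsOver k (K (n * r)) X f)) ∧
    (∀ n : ℕ, 1 ≤ n →
      Nat.card
          (ptsOver (K r) (K (n * r))
            (Limits.pullback f (Spec.map (CommRingCat.ofHom (algebraMap k (K r)))))
            (Limits.pullback.snd f (Spec.map (CommRingCat.ofHom (algebraMap k (K r)))))) =
        Nat.card (ptsOver k (K (n * r)) X f)) ∧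
    (∀ n : ℕ, 1 ≤ n →
      ghost n (zetaOfCounts fun m =>
          Nat.card
            (ptsOver (K r) (K (m * r))
              (Limits.pullback f (Spec.map (CommRingCat.ofHom (algebraMap k (K r)))))
              (Limits.pullback.snd f
                (Spec.map (CommRingCat.ofHom (algebraMap k (K r))))))) =
        ghost (n * r) (zetaOfCounts fun m => Nat.card (ptsOver k (K m) X f))) := by
  have e n := ptsOverPullbackEquiv (K r) (K (n * r)) X f
  refine ⟨fun n _ => ⟨e n⟩, fun n _ => Nat.card_congr (e n), fun n hn => ?_⟩
  rw [PowerSeries.ghost_zetaOfCounts _ (by omega),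
    PowerSeries.ghost_zetaOfCounts _ (Nat.mul_ne_zero (by omega) (by omega)), Nat.card_congr (e n)]

/-- **Witt-ring Frobenius corresponds to base change.**
Let `X` be a scheme of finite type over a finite field `k = F_q`, `K m` a degree-`m`
extension of `k`, and fix `r ≥ 1`.  Let `X_{q^r} = X ×_{Spec k} Spec (K r)` be the
base change, a scheme over `K r` via the second projection.  Then for every `n ≥ 1`
there is a natural bijection between `K r`-morphisms `Spec K(nr) ⟶ X_{q^r}` and
`k`-morphisms `Spec K(nr) ⟶ X`; hence `N_n(X_{q^r}/K r) = N_{nr}(X/k)`, and the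
ghost coordinates of the zeta functions satisfy
`gh_n(Z(X_{q^r}/K r, t)) = gh_{nr}(Z(X/k, t))`, i.e.
`Fr_r(Z(X/k,t)) = Z(X_{q^r}/K r, t)`. -/
theorem frobenius_corresponds_to_base_change
    {k : Type} [Field k] [Fintype k]
    (K : ℕ → Type) [∀ m, Field (K m)] [∀ m, Algebra k (K m)]
    (hK : ∀ m, 1 ≤ m → Module.finrank k (K m) = m)
    (X : Scheme) (f : X ⟶ Spec (CommRingCat.of k))
    [LocallyOfFiniteType f] [QuasiCompact f]
    (r : ℕ) (hr : 1 ≤ r)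
    [∀ m, Algebra (K r) (K (m * r))] [∀ m, IsScalarTower k (K r) (K (m * r))] :
    (∀ n : ℕ, 1 ≤ n →
      Nonempty
        (ptsOver (K r) (K (n * r))
            (Limits.pullback f (Spec.map (CommRingCat.ofHom (algebraMap k (K r)))))
            (Limits.pullback.snd f (Spec.map (CommRingCat.ofHom (algebraMap k (K r))))) ≃
          ptsOver k (K (n * r)) X f)) ∧
    (∀ n : ℕ, 1 ≤ n →
      Nat.card
          (ptsOver (K r) (K (n * r))
            (Limits.pullback f (Spec.map (CommRingCat.ofHom (algebraMap k (K r)))))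
            (Limits.pullback.snd f (Spec.map (CommRingCat.ofHom (algebraMap k (K r)))))) =
        Nat.card (ptsOver k (K (n * r)) X f)) ∧
    (∀ n : ℕ, 1 ≤ n →
      ghost n (zetaOfCounts fun m =>
          Nat.card
            (ptsOver (K r) (K (m * r))
              (Limits.pullback f (Spec.map (CommRingCat.ofHom (algebraMap k (K r)))))
              (Limits.pullback.snd f
                (Spec.map (CommRingCat.ofHom (algebraMap k (K r))))))) =
        ghost (n * r) (zetaOfCounts fun m => Nat.card (ptsOver k (K m) X f))) :=
  frobenius_corresponds_to_base_change_general K X f r hr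

end
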